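/- arXiv:2405.15514 — 13 statements merged into one kernel-verified Lean document; each statement's English description precedes it below -/
import Mathlib

section
/- Let α > 0 and q_i, q_j ∈ (0,1). Define Q = 1 + α(q_i + q_j) and ξ = (1/(2α))(Q - sqrt(Q² - 4α(1+α)q_i q_j)). Then ξ > q_i q_j. -/
theorem bethe_xi_gt_prod_ferromagnetic (α qi qj : ℝ) (hα : 0 < α)
    (hqi : qi ∈ Set.Ioo (0:ℝ) 1) (hqj : qj ∈ Set.Ioo (0:ℝ) 1) :
    let Q := 1 + α * (qi + qj)
    let ξ := (1 / (2 * α)) * (Q - Real.sqrt (Q ^ 2 - 4 * α * (1 + α) * qi * qj))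
    ξ > qi * qj := by
  intro Q ξ
  obtain ⟨hi0, hi1⟩ := hqi
  obtain ⟨hj0, hj1⟩ := hqj
  have hQp : 0 < Q - 2 * α * (qi * qj) := by
    have : Q - 2 * α * (qi * qj) = 1 + α * (qi * (1 - qj) + qj * (1 - qi)) := by
      simp only [Q]; ring
    rw [this]
    nlinarith [mul_pos (mul_pos hα hi0) (sub_pos.mpr hj1),
      mul_pos (mul_pos hα hj0) (sub_pos.mpr hi1)]
  have hkey : Q ^ 2 - 4 * α * (1 + α) * qi * qj < (Q - 2 * α * (qi * qj)) ^ 2 := by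
    have h : (Q - 2 * α * (qi * qj)) ^ 2 - (Q ^ 2 - 4 * α * (1 + α) * qi * qj)
        = 4 * α ^ 2 * (qi * qj) * ((1 - qi) * (1 - qj)) := by
      simp only [Q]; ring
    have hpos : 0 < 4 * α ^ 2 * (qi * qj) * ((1 - qi) * (1 - qj)) := by
      have := sub_pos.mpr hi1
      have := sub_pos.mpr hj1
      positivity
    linarith
  have hsqrt : Real.sqrt (Q ^ 2 - 4 * α * (1 + α) * qi * qj) < Q - 2 * α * (qi * qj) :=
    (Real.sqrt_lt' hQp).mpr hkey
  have h2α : 0 < 2 * α := by linarith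
  show qi * qj < ξ
  rw [show ξ = (Q - Real.sqrt (Q ^ 2 - 4 * α * (1 + α) * qi * qj)) / (2 * α) by
    simp only [ξ]; ring]
  rw [lt_div_iff₀ h2α]
  linarith
end

section
/- Let α < 0 with α > -1, and q_i, q_j ∈ (0,1). Define Q = 1 + α(q_i + q_j) and ξ = (1/(2α))(Q - sqrt(Q² - 4α(1+α)q_i q_j)). Then ξ < q_i q_j. -/
theorem bethe_xi_lt_prod_antiferromagnetic (α qi qj : ℝ) (hα : α < 0) (hα' : -1 < α)
    (hqi : qi ∈ Set.Ioo (0:ℝ) 1) (hqj : qj ∈ Set.Ioo (0:ℝ) 1) :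
    let Q := 1 + α * (qi + qj)
    let ξ := (1 / (2 * α)) * (Q - Real.sqrt (Q ^ 2 - 4 * α * (1 + α) * qi * qj))
    ξ < qi * qj := by
  intro Q ξ
  obtain ⟨hi0, hi1⟩ := hqi
  obtain ⟨hj0, hj1⟩ := hqj
  have hL : 0 < Q - 2 * α * (qi * qj) := by
    have : qi * (1 - qj) + qj * (1 - qi) < 1 := by nlinarith
    show (0:ℝ) < 1 + α * (qi + qj) - 2 * α * (qi * qj)
    nlinarith
  have hD : Q ^ 2 - 4 * α * (1 + α) * qi * qj < (Q - 2 * α * (qi * qj)) ^ 2 := by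
    have key : (Q - 2 * α * (qi * qj)) ^ 2 - (Q ^ 2 - 4 * α * (1 + α) * qi * qj)
        = 4 * α ^ 2 * (qi * qj) * ((1 - qi) * (1 - qj)) := by
      show (1 + α * (qi + qj) - 2 * α * (qi * qj)) ^ 2
          - ((1 + α * (qi + qj)) ^ 2 - 4 * α * (1 + α) * qi * qj) = _
      ring
    have hpos : 0 < 4 * α ^ 2 * (qi * qj) * ((1 - qi) * (1 - qj)) := by
      have h1 : 0 < α ^ 2 := by nlinarith
      have h2 : 0 < qi * qj := mul_pos hi0 hj0
      have h3 : 0 < (1 - qi) * (1 - qj) := mul_pos (by linarith) (by linarith)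
      have := mul_pos (mul_pos (mul_pos (by norm_num : (0:ℝ) < 4) h1) h2) h3
      linarith
    linarith [key, hpos]
  have hs : Real.sqrt (Q ^ 2 - 4 * α * (1 + α) * qi * qj) < Q - 2 * α * (qi * qj) :=
    (Real.sqrt_lt' hL).mpr hD
  have h2α : 2 * α < 0 := by linarith
  show (1 / (2 * α)) * (Q - Real.sqrt (Q ^ 2 - 4 * α * (1 + α) * qi * qj)) < qi * qj
  rw [one_div, inv_mul_eq_div, div_lt_iff_of_neg h2α]
  nlinarith [hs]
end

section
/- Let α > 0 and q_i, q_j ∈ (0,1), and let ξ(q_i, q_j) = (1/(2α))(1 + α(q_i+q_j) - sqrt((1 + α(q_i+q_j))² - 4α(1+α)q_i q_j)). Define T(q_i,q_j) = q_i q_j (1-q_i)(1-q_j) - (ξ(q_i,q_j) - q_i q_j)². Then T(q_i,q_j) > 0. -/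
noncomputable def xiOpt (α x y : ℝ) : ℝ :=
  (1 / (2 * α)) * ((1 + α * (x + y)) -
    Real.sqrt ((1 + α * (x + y)) ^ 2 - 4 * α * (1 + α) * x * y))

theorem bethe_T_pos (α qi qj : ℝ) (hα : 0 < α)
    (hqi : qi ∈ Set.Ioo (0:ℝ) 1) (hqj : qj ∈ Set.Ioo (0:ℝ) 1) :
    qi * qj * (1 - qi) * (1 - qj) - (xiOpt α qi qj - qi * qj) ^ 2 > 0 := by
  obtain ⟨hqi0, hqi1⟩ := hqi
  obtain ⟨hqj0, hqj1⟩ := hqj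
  obtain ⟨s, hsdef⟩ : ∃ s, s = Real.sqrt ((1 + α * (qi + qj)) ^ 2
      - 4 * α * (1 + α) * qi * qj) := ⟨_, rfl⟩
  have hDi : (1 + α * (qi + qj) - 2 * α * qi) ^ 2
      < (1 + α * (qi + qj)) ^ 2 - 4 * α * (1 + α) * qi * qj := by
    nlinarith [mul_pos (mul_pos hα hqi0) (sub_pos.mpr hqj1)]
  have hDj : (1 + α * (qi + qj) - 2 * α * qj) ^ 2
      < (1 + α * (qi + qj)) ^ 2 - 4 * α * (1 + α) * qi * qj := by
    nlinarith [mul_pos (mul_pos hα hqj0) (sub_pos.mpr hqi1)]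
  have hD0 : 0 ≤ (1 + α * (qi + qj)) ^ 2 - 4 * α * (1 + α) * qi * qj :=
    le_trans (sq_nonneg _) hDi.le
  have hs0 : 0 ≤ s := hsdef ▸ Real.sqrt_nonneg _
  have hs2 : s ^ 2 = (1 + α * (qi + qj)) ^ 2 - 4 * α * (1 + α) * qi * qj := by
    rw [hsdef]; exact Real.sq_sqrt hD0
  have hsi : 1 + α * (qi + qj) - 2 * α * qi < s := by
    by_contra h
    push_neg at h
    have h3 := pow_le_pow_left₀ hs0 h 2
    linarith [hs2, hDi, h3]
  have hsj : 1 + α * (qi + qj) - 2 * α * qj < s := by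
    by_contra h
    push_neg at h
    have h3 := pow_le_pow_left₀ hs0 h 2
    linarith [hs2, hDj, h3]
  obtain ⟨ξ, hξdef⟩ : ∃ x, x = xiOpt α qi qj := ⟨_, rfl⟩
  rw [← hξdef]
  have h2 : 2 * α * ξ = (1 + α * (qi + qj)) - s := by
    rw [hξdef, xiOpt, ← hsdef]
    field_simp
  have hξi : ξ < qi := by nlinarith [h2, hsi]
  have hξj : ξ < qj := by nlinarith [h2, hsj]
  have hkey : ξ - qi * qj = α * (qi - ξ) * (qj - ξ) := by
    have h6 : (4 * α) * (ξ - qi * qj) = (4 * α) * (α * (qi - ξ) * (qj - ξ)) := by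
      linear_combination (-(2 * α * ξ - (1 + α * (qi + qj)) - s)) * h2 - hs2
    exact mul_left_cancel₀ (by positivity : (4 * α) ≠ 0) h6
  have hpos : 0 < ξ - qi * qj := by
    have h5 := mul_pos (mul_pos hα (sub_pos.mpr hξi)) (sub_pos.mpr hξj)
    nlinarith [hkey, h5]
  have hub1 : ξ - qi * qj < qi * (1 - qj) := by nlinarith [hξi]
  have hub2 : ξ - qi * qj < qj * (1 - qi) := by nlinarith [hξj]
  nlinarith [mul_lt_mul'' hub1 hub2 hpos.le hpos.le]
end

section
/- Let α > 0, q_i, q_j ∈ (0,1), and let ξ⁺_α denote the optimal pairwise marginal function ξ⁺_α(x,y) = (1/(2α))(1 + α(x+y) - sqrt((1+α(x+y))² - 4α(1+α)xy)), and let ξ⁻ denote the same expression with α replaced by α' = -α/(α+1). Then ξ⁻(q_i, q_j) - q_i q_j = -ξ⁺_α(q_i, 1-q_j) + q_i(1-q_j). -/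
/-!
Write `α' = -α / (α + 1)`, so that `1 + α' = 1 / (1 + α)`. Clearing the factor `(1 + α)²`,
the discriminant of `ξ_{α'}` at `(x, y)` is that of `ξ_α` at `(x, 1 - y)`; as `1 + α > 0` the two
square roots differ by the factor `1 / (1 + α)`, and what is left is an identity of rational
functions.
-/

def xiDisc (α x y : ℝ) : ℝ :=
  (1 + α * (x + y)) ^ 2 - 4 * α * (1 + α) * x * y

lemma xiOpt_eq (α x y : ℝ) :
    xiOpt α x y = (1 + α * (x + y) - √(xiDisc α x y)) / (2 * α) := by
  rw [xiOpt, xiDisc, one_div_mul_eq_div]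

lemma xiDisc_neg_div_add_one {α : ℝ} (hα : α + 1 ≠ 0) (x y : ℝ) :
    xiDisc (-α / (α + 1)) x y = xiDisc α x (1 - y) / (α + 1) ^ 2 := by
  unfold xiDisc
  field_simp
  ring

lemma sqrt_xiDisc_neg_div_add_one {α : ℝ} (hα : 0 < α + 1) (x y : ℝ) :
    √(xiDisc (-α / (α + 1)) x y) = √(xiDisc α x (1 - y)) / (α + 1) := by
  rw [xiDisc_neg_div_add_one hα.ne', Real.sqrt_div' _ (sq_nonneg _), Real.sqrt_sq hα.le]

lemma xiOpt_neg_div_add_one {α : ℝ} (hα : α ≠ 0) (hα₁ : 0 < α + 1) (x y : ℝ) :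
    xiOpt (-α / (α + 1)) x y - x * y = -xiOpt α x (1 - y) + x * (1 - y) := by
  rw [xiOpt_eq, xiOpt_eq, sqrt_xiDisc_neg_div_add_one hα₁]
  field_simp
  ring

theorem bethe_xi_reflection_general (α qi qj : ℝ) (hα : 0 < α) :
    xiOpt (-α / (α + 1)) qi qj - qi * qj = -xiOpt α qi (1 - qj) + qi * (1 - qj) :=
  xiOpt_neg_div_add_one hα.ne' (by linarith) qi qj

theorem bethe_xi_reflection (α qi qj : ℝ) (hα : 0 < α)
    (hqi : qi ∈ Set.Ioo (0:ℝ) 1) (hqj : qj ∈ Set.Ioo (0:ℝ) 1) :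
    xiOpt (-α / (α + 1)) qi qj - qi * qj = -xiOpt α qi (1 - qj) + qi * (1 - qj) :=
  bethe_xi_reflection_general α qi qj hα
end

section
/- Let α > 0, and for q_i, q_j ∈ (0,1) let ξ⁺ be as above and T⁺(x,y) = xy(1-x)(1-y) - (ξ⁺(x,y) - xy)², and let T⁻ be defined analogously with α replaced by -α/(α+1). Then T⁻(q_i, q_j) = T⁺(q_i, 1-q_j) = T⁺(1-q_i, q_j). -/
noncomputable def TOpt (α x y : ℝ) : ℝ :=
  x * y * (1 - x) * (1 - y) - (xiOpt α x y - x * y) ^ 2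

lemma TOpt_symm (α x y : ℝ) : TOpt α x y = TOpt α y x := by
  have hs : (1 + α * (y + x)) ^ 2 - 4 * α * (1 + α) * y * x
      = (1 + α * (x + y)) ^ 2 - 4 * α * (1 + α) * x * y := by ring
  unfold TOpt xiOpt
  rw [hs]; ring

lemma TOpt_reflect (α x y : ℝ) (hα : 0 < α) :
    TOpt (-α / (α + 1)) x y = TOpt α x (1 - y) := by
  have hA : (0:ℝ) < α + 1 := by linarith
  have hA' : α + 1 ≠ 0 := ne_of_gt hA
  have hα' : α ≠ 0 := ne_of_gt hα
  have harg : (1 + α * (x + (1 - y))) ^ 2 - 4 * α * (1 + α) * x * (1 - y)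
      = (α + 1) ^ 2 * ((1 + (-α / (α + 1)) * (x + y)) ^ 2
          - 4 * (-α / (α + 1)) * (1 + (-α / (α + 1))) * x * y) := by
    field_simp
    ring
  have hsqrt : Real.sqrt ((1 + α * (x + (1 - y))) ^ 2 - 4 * α * (1 + α) * x * (1 - y))
      = (α + 1) * Real.sqrt ((1 + (-α / (α + 1)) * (x + y)) ^ 2
          - 4 * (-α / (α + 1)) * (1 + (-α / (α + 1))) * x * y) := by
    rw [harg, Real.sqrt_mul (sq_nonneg _), Real.sqrt_sq (le_of_lt hA)]
  have key : xiOpt α x (1 - y) - x * (1 - y)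
      = -(xiOpt (-α / (α + 1)) x y - x * y) := by
    unfold xiOpt
    rw [hsqrt]
    field_simp
    ring
  have hsq : (xiOpt α x (1 - y) - x * (1 - y)) ^ 2
      = (xiOpt (-α / (α + 1)) x y - x * y) ^ 2 := by rw [key]; ring
  unfold TOpt
  rw [hsq]; ring

theorem bethe_T_reflection (α qi qj : ℝ) (hα : 0 < α)
    (hqi : qi ∈ Set.Ioo (0:ℝ) 1) (hqj : qj ∈ Set.Ioo (0:ℝ) 1) :
    TOpt (-α / (α + 1)) qi qj = TOpt α qi (1 - qj) ∧
    TOpt (-α / (α + 1)) qi qj = TOpt α (1 - qi) qj := by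
  refine ⟨TOpt_reflect α qi qj hα, ?_⟩
  rw [TOpt_symm, TOpt_reflect α qj qi hα, TOpt_symm]
end

section
/- Let α > 0, q_i ∈ (0,1), and define r(q_i, q_j) = (q_j(1-q_j) - ξ(q_i,q_j) + q_i q_j) / T(q_i,q_j) for q_j ∈ (0,1), where ξ and T are the optimal pairwise marginal and its associated denominator as above. Then r(q_i, 1 - q_i) = 1 / ξ(q_i, 1 - q_i). -/
noncomputable def rQuot (α x y : ℝ) : ℝ :=
  (y * (1 - y) - xiOpt α x y + x * y) / TOpt α x y

theorem bethe_r_at_stationary (α qi : ℝ) (hα : 0 < α) (hqi : qi ∈ Set.Ioo (0:ℝ) 1) :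
    rQuot α qi (1 - qi) = 1 / xiOpt α qi (1 - qi) := by
  obtain ⟨h0, h1⟩ := hqi
  set p := qi * (1 - qi) with hp
  have hp0 : 0 < p := mul_pos h0 (by linarith)
  have hp4 : p ≤ 1 / 4 := by nlinarith [sq_nonneg (qi - 1/2)]
  have hins : 0 ≤ (1 + α) ^ 2 - 4 * α * (1 + α) * p := by nlinarith
  set s := Real.sqrt ((1 + α) ^ 2 - 4 * α * (1 + α) * p) with hs
  have hs2 : s ^ 2 = (1 + α) ^ 2 - 4 * α * (1 + α) * p := Real.sq_sqrt hins
  have hsnn : 0 ≤ s := Real.sqrt_nonneg _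
  have h4 : 4 * α * p ≤ α := by nlinarith
  have hslt : s < 1 + α := by nlinarith [mul_pos (mul_pos hα hp0) (show (0:ℝ) < 1 + α by linarith)]
  have hsgt : 1 + α - 4 * α * p < s := by nlinarith [mul_pos hα hp0, sq_nonneg (s - (1 + α - 4 * α * p))]
  have hxi : xiOpt α qi (1 - qi) = ((1 + α) - s) / (2 * α) := by
    unfold xiOpt
    rw [show (1 + α * (qi + (1 - qi))) ^ 2 - 4 * α * (1 + α) * qi * (1 - qi)
        = (1 + α) ^ 2 - 4 * α * (1 + α) * p from by rw [hp]; ring,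
      show 1 + α * (qi + (1 - qi)) = 1 + α from by ring]
    ring
  set ξ := ((1 + α) - s) / (2 * α) with hξ
  have hξ0 : 0 < ξ := div_pos (by linarith) (by linarith)
  have hξlt : ξ < 2 * p := by
    rw [hξ, div_lt_iff₀ (by linarith : (0:ℝ) < 2 * α)]
    nlinarith
  have hT : TOpt α qi (1 - qi) = (2 * p - ξ) * ξ := by
    rw [TOpt, hxi, hp]; ring
  rw [rQuot, hT, hxi]
  have hne : 2 * p - ξ ≠ 0 := ne_of_gt (by linarith)
  have hξne : ξ ≠ 0 := ne_of_gt hξ0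
  rw [div_eq_div_iff (by positivity) hξne]
  rw [hp]; ring
end

section
/- Let α > 0, fix q_i ∈ (0,1), and let r(q_i, ·) be as above. Then the limit of r(q_i, q_j) as q_j → 0⁺ equals (1 + α q_i²)/((1 + α q_i) q_i (1 - q_i)), and the limit as q_j → 1⁻ equals (1 + α(1-q_i)²)/((1 + α(1-q_i)) q_i (1 - q_i)). -/
noncomputable def Rrad (α x y : ℝ) : ℝ := (1 + α * (x + y)) ^ 2 - 4 * α * (1 + α) * x * y

noncomputable def Wfun (α x y : ℝ) : ℝ := 2 * α * y * (1 + x - y) - (1 + α * (x + y))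

noncomputable def Mfun (α x y : ℝ) : ℝ :=
  (2 * α * x * y - (1 + α * (x + y))) * ((1 + α * (x + y)) - α * xiOpt α x y)
    + α * (x * y * (1 + α * (2 - x - y)))

noncomputable def Ffun (α x y : ℝ) : ℝ :=
  2 * (1 + α * (x - y) ^ 2) * Mfun α x y /
    ((Wfun α x y - Real.sqrt (Rrad α x y)) * x * (1 - x) * Rrad α x y)

lemma Rrad_pos (α x y : ℝ) (hα : 0 < α) (hx : x ∈ Set.Ioo (0:ℝ) 1) (hy : y ∈ Set.Icc (0:ℝ) 1) :
    0 < Rrad α x y := by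
  obtain ⟨hx0, hx1⟩ := hx
  obtain ⟨hy0, hy1⟩ := hy
  have h1 : Rrad α x y = 1 + 2*α*(x*(1-y) + y*(1-x)) + (α*(x-y))^2 := by unfold Rrad; ring
  rw [h1]
  nlinarith [sq_nonneg (α*(x-y)), mul_nonneg (mul_nonneg hα.le hx0.le) (by linarith : (0:ℝ) ≤ 1-y),
    mul_nonneg (mul_nonneg hα.le hy0) (by linarith : (0:ℝ) ≤ 1-x)]

lemma key (α x y : ℝ) (hα : 0 < α) (hx : x ∈ Set.Ioo (0:ℝ) 1) (hy : y ∈ Set.Ioo (0:ℝ) 1)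
    (hWD : Wfun α x y - Real.sqrt (Rrad α x y) ≠ 0) :
    rQuot α x y = Ffun α x y := by
  set D := Real.sqrt (Rrad α x y) with hDdef
  set ξ := xiOpt α x y with hXdef
  have hR : 0 < Rrad α x y := Rrad_pos α x y hα hx ⟨hy.1.le, hy.2.le⟩
  have hD2 : D ^ 2 = (1 + α * (x + y)) ^ 2 - 4 * α * (1 + α) * x * y := by
    rw [hDdef, Real.sq_sqrt hR.le]; rfl
  have hxi : 2 * α * ξ = (1 + α * (x + y)) - D := by
    rw [hXdef, xiOpt, show (1 + α * (x + y)) ^ 2 - 4 * α * (1 + α) * x * y = Rrad α x y from rfl,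
      ← hDdef]
    field_simp
  have hq : α * ξ^2 - (1 + α*(x+y)) * ξ + (1+α)*x*y = 0 := by
    have h4 : (4:ℝ)*α ≠ 0 := by positivity
    have h : 4*α*(α * ξ^2 - (1 + α*(x+y)) * ξ + (1+α)*x*y) = 4*α*0 := by
      linear_combination (2*α*ξ - (1 + α*(x+y)) - D) * hxi + hD2
    exact mul_left_cancel₀ h4 h
  -- explicit forms
  have eT : TOpt α x y = x * y * (1 - x) * (1 - y) - (ξ - x * y) ^ 2 := rfl
  have eM : Mfun α x y = (2 * α * x * y - (1 + α * (x + y))) * ((1 + α * (x + y)) - α * ξ)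
      + α * (x * y * (1 + α * (2 - x - y))) := rfl
  have eW : Wfun α x y = 2 * α * y * (1 + x - y) - (1 + α * (x + y)) := rfl
  have eR : Rrad α x y = (1 + α * (x + y)) ^ 2 - 4 * α * (1 + α) * x * y := rfl
  have hTM : TOpt α x y * Mfun α x y = x*y*(1-y)*(x-1)*Rrad α x y := by
    rw [eT, eM, eR]
    have h2 : α * ((x * y * (1 - x) * (1 - y) - (ξ - x * y) ^ 2) *
        ((2 * α * x * y - (1 + α * (x + y))) * ((1 + α * (x + y)) - α * ξ)
      + α * (x * y * (1 + α * (2 - x - y)))))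
        = α * (x*y*(1-y)*(x-1)*((1 + α * (x + y)) ^ 2 - 4 * α * (1 + α) * x * y)) := by
      linear_combination (-(((2 * α * x * y - (1 + α * (x + y))) * ((1 + α * (x + y)) - α * ξ)
        + α * (x * y * (1 + α * (2 - x - y)))) + (2*α*x*y - (1 + α*(x+y)))^2)) * hq
    exact mul_left_cancel₀ hα.ne' h2
  have hN : (y*(1-y) - ξ + x*y) * (Wfun α x y - D) = -2*y*(1-y)*(1+α*(x-y)^2) := by
    rw [eW]
    have h2 : 2*α*((y*(1-y) - ξ + x*y) * ((2 * α * y * (1 + x - y) - (1 + α * (x + y))) - D))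
        = 2*α*(-2*y*(1-y)*(1+α*(x-y)^2)) := by
      linear_combination (-((2 * α * y * (1 + x - y) - (1 + α * (x + y))) - D)) * hxi - hD2
    exact mul_left_cancel₀ (by positivity : (2:ℝ)*α ≠ 0) h2
  have hRHSpos : 0 < x*y*(1-y)*(1-x)*Rrad α x y :=
    mul_pos (mul_pos (mul_pos (mul_pos hx.1 hy.1) (by linarith [hy.2])) (by linarith [hx.2])) hR
  have hT0 : TOpt α x y ≠ 0 := by
    intro h
    rw [h, zero_mul] at hTM
    have : x*y*(1-y)*(x-1)*Rrad α x y = -(x*y*(1-y)*(1-x)*Rrad α x y) := by ring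
    rw [this] at hTM
    linarith [hTM, hRHSpos]
  have hK0 : (Wfun α x y - D) * x * (1 - x) * Rrad α x y ≠ 0 :=
    mul_ne_zero (mul_ne_zero (mul_ne_zero hWD hx.1.ne') (by linarith [hx.2] : (1:ℝ) - x ≠ 0)) hR.ne'
  rw [rQuot, Ffun, ← hXdef, ← hDdef, div_eq_div_iff hT0 hK0]
  linear_combination (x*(1-x)*Rrad α x y) * hN - (2*(1+α*(x-y)^2)) * hTM

lemma Ffun_contAt (α x y₀ : ℝ)
    (h : (Wfun α x y₀ - Real.sqrt (Rrad α x y₀)) * x * (1-x) * Rrad α x y₀ ≠ 0) :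
    ContinuousAt (fun y => Ffun α x y) y₀ := by
  unfold Ffun
  apply ContinuousAt.div
  · unfold Mfun xiOpt; fun_prop
  · unfold Wfun Rrad; fun_prop
  · exact h

lemma limit_zero (α qi : ℝ) (hα : 0 < α) (hqi : qi ∈ Set.Ioo (0:ℝ) 1) :
    Filter.Tendsto (fun qj => rQuot α qi qj) (nhdsWithin 0 (Set.Ioi 0))
      (nhds ((1 + α * qi ^ 2) / ((1 + α * qi) * qi * (1 - qi)))) := by
  obtain ⟨hq0, hq1⟩ := hqi
  have hS : (0:ℝ) < 1 + α * qi := by nlinarith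
  have h0R : Rrad α qi 0 = (1 + α*qi)^2 := by unfold Rrad; ring
  have h0s : Real.sqrt (Rrad α qi 0) = 1 + α*qi := by
    rw [h0R, Real.sqrt_sq hS.le]
  have h0xi : xiOpt α qi 0 = 0 := by
    unfold xiOpt
    rw [show (1 + α*(qi+0))^2 - 4*α*(1+α)*qi*0 = (1+α*qi)^2 by ring, Real.sqrt_sq hS.le]
    ring
  have h0W : Wfun α qi 0 - Real.sqrt (Rrad α qi 0) = -(2*(1+α*qi)) := by
    rw [h0s]; unfold Wfun; ring
  have hden : (Wfun α qi 0 - Real.sqrt (Rrad α qi 0)) * qi * (1-qi) * Rrad α qi 0 ≠ 0 := by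
    rw [h0W, h0R]
    refine mul_ne_zero (mul_ne_zero (mul_ne_zero ?_ hq0.ne') ?_) ?_
    · exact neg_ne_zero.mpr (by positivity)
    · linarith
    · positivity
  have hval : Ffun α qi 0 = (1 + α * qi ^ 2) / ((1 + α * qi) * qi * (1 - qi)) := by
    unfold Ffun Mfun
    rw [h0xi, h0W, h0R]
    rw [div_eq_div_iff
      (mul_ne_zero (mul_ne_zero (mul_ne_zero (neg_ne_zero.mpr (by positivity)) hq0.ne')
        (by linarith : (1:ℝ) - qi ≠ 0)) (by positivity))
      (mul_pos (mul_pos hS hq0) (by linarith : (0:ℝ) < 1 - qi)).ne']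
    ring
  have hFt : Filter.Tendsto (fun qj => Ffun α qi qj) (nhdsWithin 0 (Set.Ioi 0))
      (nhds ((1 + α * qi ^ 2) / ((1 + α * qi) * qi * (1 - qi)))) := by
    rw [← hval]
    exact ((Ffun_contAt α qi 0 hden).continuousWithinAt)
  have hc : ContinuousAt (fun y => Wfun α qi y - Real.sqrt (Rrad α qi y)) 0 := by
    unfold Wfun Rrad; fun_prop
  have hne : ∀ᶠ y in nhds (0:ℝ), Wfun α qi y - Real.sqrt (Rrad α qi y) ≠ 0 := by
    apply hc.eventually_ne
    rw [h0W]
    exact neg_ne_zero.mpr (by positivity)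
  have hlt : ∀ᶠ y in nhds (0:ℝ), y ∈ Set.Iio (1:ℝ) :=
    isOpen_Iio.eventually_mem (show (0:ℝ) ∈ Set.Iio 1 by norm_num)
  have hev : ∀ᶠ y in nhdsWithin 0 (Set.Ioi 0), Ffun α qi y = rQuot α qi y := by
    filter_upwards [hne.filter_mono nhdsWithin_le_nhds, hlt.filter_mono nhdsWithin_le_nhds,
      self_mem_nhdsWithin] with y h1 h2 h3
    exact (key α qi y hα ⟨hq0, hq1⟩ ⟨h3, h2⟩ h1).symm
  exact Filter.Tendsto.congr' hev hFt

lemma limit_one (α qi : ℝ) (hα : 0 < α) (hqi : qi ∈ Set.Ioo (0:ℝ) 1) :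
    Filter.Tendsto (fun qj => rQuot α qi qj) (nhdsWithin 1 (Set.Iio 1))
      (nhds ((1 + α * (1 - qi) ^ 2) / ((1 + α * (1 - qi)) * qi * (1 - qi)))) := by
  obtain ⟨hq0, hq1⟩ := hqi
  have hS : (0:ℝ) < 1 + α * (1 - qi) := by nlinarith
  have h1R : Rrad α qi 1 = (1 + α*(1-qi))^2 := by unfold Rrad; ring
  have h1s : Real.sqrt (Rrad α qi 1) = 1 + α*(1-qi) := by
    rw [h1R, Real.sqrt_sq hS.le]
  have h1xi : xiOpt α qi 1 = qi := by
    unfold xiOpt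
    rw [show (1 + α*(qi+1))^2 - 4*α*(1+α)*qi*1 = (1+α*(1-qi))^2 by ring, Real.sqrt_sq hS.le]
    field_simp
    ring
  have h1W : Wfun α qi 1 - Real.sqrt (Rrad α qi 1) = -(2*(1+α*(1-qi))) := by
    rw [h1s]; unfold Wfun; ring
  have hden : (Wfun α qi 1 - Real.sqrt (Rrad α qi 1)) * qi * (1-qi) * Rrad α qi 1 ≠ 0 := by
    rw [h1W, h1R]
    refine mul_ne_zero (mul_ne_zero (mul_ne_zero ?_ hq0.ne') ?_) ?_
    · exact neg_ne_zero.mpr (by positivity)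
    · linarith
    · positivity
  have hval : Ffun α qi 1 = (1 + α * (1 - qi) ^ 2) / ((1 + α * (1 - qi)) * qi * (1 - qi)) := by
    unfold Ffun Mfun
    rw [h1xi, h1W, h1R]
    rw [div_eq_div_iff
      (mul_ne_zero (mul_ne_zero (mul_ne_zero (neg_ne_zero.mpr (by positivity)) hq0.ne')
        (by linarith : (1:ℝ) - qi ≠ 0)) (by positivity))
      (mul_pos (mul_pos hS hq0) (by linarith : (0:ℝ) < 1 - qi)).ne']
    ring
  have hFt : Filter.Tendsto (fun qj => Ffun α qi qj) (nhdsWithin 1 (Set.Iio 1))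
      (nhds ((1 + α * (1 - qi) ^ 2) / ((1 + α * (1 - qi)) * qi * (1 - qi)))) := by
    rw [← hval]
    exact ((Ffun_contAt α qi 1 hden).continuousWithinAt)
  have hc : ContinuousAt (fun y => Wfun α qi y - Real.sqrt (Rrad α qi y)) 1 := by
    unfold Wfun Rrad; fun_prop
  have hne : ∀ᶠ y in nhds (1:ℝ), Wfun α qi y - Real.sqrt (Rrad α qi y) ≠ 0 := by
    apply hc.eventually_ne
    rw [h1W]
    exact neg_ne_zero.mpr (by positivity)
  have hgt : ∀ᶠ y in nhds (1:ℝ), y ∈ Set.Ioi (0:ℝ) :=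
    isOpen_Ioi.eventually_mem (show (1:ℝ) ∈ Set.Ioi 0 by norm_num)
  have hev : ∀ᶠ y in nhdsWithin 1 (Set.Iio 1), Ffun α qi y = rQuot α qi y := by
    filter_upwards [hne.filter_mono nhdsWithin_le_nhds, hgt.filter_mono nhdsWithin_le_nhds,
      self_mem_nhdsWithin] with y h1 h2 h3
    exact (key α qi y hα ⟨hq0, hq1⟩ ⟨h2, h3⟩ h1).symm
  exact Filter.Tendsto.congr' hev hFt

theorem bethe_r_boundary_limits (α qi : ℝ) (hα : 0 < α) (hqi : qi ∈ Set.Ioo (0:ℝ) 1) :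
    Filter.Tendsto (fun qj => rQuot α qi qj) (nhdsWithin 0 (Set.Ioi 0))
      (nhds ((1 + α * qi ^ 2) / ((1 + α * qi) * qi * (1 - qi)))) ∧
    Filter.Tendsto (fun qj => rQuot α qi qj) (nhdsWithin 1 (Set.Iio 1))
      (nhds ((1 + α * (1 - qi) ^ 2) / ((1 + α * (1 - qi)) * qi * (1 - qi)))) :=
  ⟨limit_zero α qi hα hqi, limit_one α qi hα hqi⟩
end

section
/- Let α > 0 and q_i ∈ (0, 1/2). With the boundary limits L₀(q_i) = (1 + α q_i²)/((1 + α q_i) q_i (1 - q_i)) and L₁(q_i) = (1 + α(1-q_i)²)/((1 + α(1-q_i)) q_i (1 - q_i)), we have L₀(q_i) < L₁(q_i); if q_i ∈ (1/2, 1) then L₁(q_i) < L₀(q_i); and if q_i = 1/2 then L₀(q_i) = L₁(q_i). -/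
theorem bethe_boundary_limit_comparison (α qi : ℝ) (hα : 0 < α)
    (hqi : qi ∈ Set.Ioo (0:ℝ) 1) :
    (qi ∈ Set.Ioo (0:ℝ) (1/2) →
      (1 + α * qi ^ 2) / ((1 + α * qi) * qi * (1 - qi)) <
      (1 + α * (1 - qi) ^ 2) / ((1 + α * (1 - qi)) * qi * (1 - qi))) ∧
    (qi ∈ Set.Ioo (1/2 : ℝ) 1 →
      (1 + α * (1 - qi) ^ 2) / ((1 + α * (1 - qi)) * qi * (1 - qi)) <
      (1 + α * qi ^ 2) / ((1 + α * qi) * qi * (1 - qi))) ∧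
    (qi = 1/2 →
      (1 + α * qi ^ 2) / ((1 + α * qi) * qi * (1 - qi)) =
      (1 + α * (1 - qi) ^ 2) / ((1 + α * (1 - qi)) * qi * (1 - qi))) := by
  obtain ⟨h0, h1⟩ := hqi
  have hq : 0 < qi := h0
  have hq1 : 0 < 1 - qi := by linarith
  have hd1 : 0 < (1 + α * qi) * qi * (1 - qi) := by positivity
  have hd2 : 0 < (1 + α * (1 - qi)) * qi * (1 - qi) := by positivity
  refine ⟨fun h => ?_, fun h => ?_, fun h => by rw [h]; ring_nf⟩
  · rw [div_lt_div_iff₀ hd1 hd2]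
    have : qi < 1/2 := h.2
    nlinarith [mul_pos (mul_pos (mul_pos (mul_pos (mul_pos (mul_pos hα hα) hq) hq) hq1) hq1)
      (show (0:ℝ) < 1 - 2*qi by linarith)]
  · rw [div_lt_div_iff₀ hd2 hd1]
    have : 1/2 < qi := h.1
    nlinarith [mul_pos (mul_pos (mul_pos (mul_pos (mul_pos (mul_pos hα hα) hq) hq) hq1) hq1)
      (show (0:ℝ) < 2*qi - 1 by linarith)]
end

section
/- Let α > 0 and q_i ∈ (0,1). Then 1/ξ(q_i, 1-q_i) > (1 + α q_i²)/((1 + α q_i) q_i (1 - q_i)), where ξ(x,y) = (1/(2α))(1 + α(x+y) - sqrt((1+α(x+y))² - 4α(1+α)xy)). -/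
theorem xiDisc_pos {α x y : ℝ} (hα : 0 ≤ α) (hx : x ∈ Set.Icc (0 : ℝ) 1)
    (hy : y ∈ Set.Icc (0 : ℝ) 1) : 0 < xiDisc α x y := by
  obtain ⟨hx0, hx1⟩ := hx
  obtain ⟨hy0, hy1⟩ := hy
  have hmix : 0 ≤ x * (1 - y) + y * (1 - x) := by nlinarith
  have hsos : xiDisc α x y = 1 + 2 * α * (x * (1 - y) + y * (1 - x)) + (α * (x - y)) ^ 2 := by
    unfold xiDisc; ring
  rw [hsos]
  positivity

theorem one_div_xiOpt {α x y : ℝ} (hα : 0 < α) (hx : 0 < x) (hy : 0 < y)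
    (hD : 0 ≤ xiDisc α x y) :
    1 / xiOpt α x y = (1 + α * (x + y) + √(xiDisc α x y)) / (2 * (1 + α) * x * y) := by
  set s := 1 + α * (x + y)
  set S := √(xiDisc α x y)
  have hS : S ^ 2 = s ^ 2 - 4 * α * (1 + α) * x * y := Real.sq_sqrt hD
  have hSs : S < s := by
    have : 0 < 4 * α * (1 + α) * x * y := by positivity
    exact lt_of_pow_lt_pow_left₀ 2 (by positivity) (by linarith)
  change 1 / ((1 / (2 * α)) * (s - S)) = _
  have : s - S ≠ 0 := (sub_pos.2 hSs).ne'
  field_simp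
  nlinarith

theorem lt_mul_sqrt_xiDisc_one_sub {α q : ℝ} (hα : 0 < α) (hq : q ∈ Set.Ioo (0 : ℝ) 1) :
    (1 + α) * (1 - α * q + 2 * α * q ^ 2) < (1 + α * q) * √(xiDisc α q (1 - q)) := by
  obtain ⟨hq0, hq1⟩ := hq
  have hq1' : 0 < 1 - q := sub_pos.2 hq1
  have hD := xiDisc_pos hα.le ⟨hq0.le, hq1.le⟩ ⟨hq1'.le, by linarith⟩
  have hgap : 0 < 4 * α ^ 2 * (1 + α) * q * (1 - q) ^ 3 := by positivity
  have hdiff : (1 + α * q) ^ 2 * xiDisc α q (1 - q) - ((1 + α) * (1 - α * q + 2 * α * q ^ 2)) ^ 2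
      = 4 * α ^ 2 * (1 + α) * q * (1 - q) ^ 3 := by
    unfold xiDisc; ring
  refine lt_of_pow_lt_pow_left₀ 2 (by positivity) ?_
  rw [mul_pow (1 + α * q), Real.sq_sqrt hD.le]
  linarith

theorem bethe_stationary_exceeds_boundary (α qi : ℝ) (hα : 0 < α)
    (hqi : qi ∈ Set.Ioo (0:ℝ) 1) :
    1 / xiOpt α qi (1 - qi) >
      (1 + α * qi ^ 2) / ((1 + α * qi) * qi * (1 - qi)) := by
  have hkey := lt_mul_sqrt_xiDisc_one_sub hα hqi
  obtain ⟨hq0, hq1⟩ := hqi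
  have hq1' : 0 < 1 - qi := sub_pos.2 hq1
  have hD := xiDisc_pos hα.le ⟨hq0.le, hq1.le⟩ ⟨hq1'.le, by linarith⟩
  rw [one_div_xiOpt hα hq0 hq1' hD.le, add_sub_cancel, mul_one, gt_iff_lt,
    div_lt_div_iff₀ (by positivity) (by positivity)]
  linarith [mul_lt_mul_of_pos_left hkey (mul_pos hq0 hq1')]
end

section
/- Fix an integer d ≥ 2 and real α > 0. Define the polynomial Ψ(q) = -(d-1)(1 + αq)^d + d(1 + αq²)(1 + αq)^{d-1}. Then Ψ(q) > 0 for all q ∈ (0, 1/2] if and only if α < 4d/(d-1)². -/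
theorem bethe_diag_dominance_polynomial_pos_iff (d : ℕ) (hd : 2 ≤ d) (α : ℝ) (hα : 0 < α) :
    (∀ q ∈ Set.Ioc (0:ℝ) (1/2),
      -((d:ℝ) - 1) * (1 + α * q) ^ d + (d:ℝ) * (1 + α * q ^ 2) * (1 + α * q) ^ (d - 1) > 0)
    ↔ α < 4 * (d:ℝ) / ((d:ℝ) - 1) ^ 2 := by
  have hdd : d - 1 + 1 = d := by omega
  have hD : (2:ℝ) ≤ (d:ℝ) := by exact_mod_cast hd
  set D := (d:ℝ) with hDdef
  have hD1 : 0 < D - 1 := by linarith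
  have hD0 : 0 < D := by linarith
  have key : ∀ q : ℝ,
      -(D - 1) * (1 + α * q) ^ d + D * (1 + α * q ^ 2) * (1 + α * q) ^ (d - 1)
      = (1 + α * q) ^ (d - 1) * (1 - α * (D - 1) * q + α * D * q ^ 2) := by
    intro q
    have h : (1 + α * q) ^ d = (1 + α * q) ^ (d - 1) * (1 + α * q) := by
      rw [← pow_succ, hdd]
    rw [h]; ring
  constructor
  · intro h
    set q := (D - 1) / (2 * D) with hq
    have hq0 : 0 < q := by positivity
    have hq2 : q ≤ 1 / 2 := by
      rw [hq, div_le_div_iff₀ (by positivity) (by norm_num)]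
      linarith
    have hΨ := h q ⟨hq0, hq2⟩
    rw [key q] at hΨ
    have hp : (0:ℝ) < (1 + α * q) ^ (d - 1) := by positivity
    have hf : 0 < 1 - α * (D - 1) * q + α * D * q ^ 2 := by
      by_contra hc
      push_neg at hc
      nlinarith
    have e : 1 - α * (D - 1) * q + α * D * q ^ 2 = 1 - α * (D - 1) ^ 2 / (4 * D) := by
      rw [hq]; field_simp; ring
    rw [e] at hf
    rw [lt_div_iff₀ (by positivity)]
    have : α * (D - 1) ^ 2 / (4 * D) < 1 := by linarith
    calc α * (D - 1) ^ 2 = α * (D - 1) ^ 2 / (4 * D) * (4 * D) := by field_simp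
    _ < 1 * (4 * D) := by
        apply mul_lt_mul_of_pos_right this (by positivity)
    _ = 4 * D := by ring
  · rintro hα' q ⟨hq0, hq1⟩
    rw [key q]
    have hp : (0:ℝ) < (1 + α * q) ^ (d - 1) := by positivity
    have h4 : α * (D - 1) ^ 2 < 4 * D := by
      rw [lt_div_iff₀ (by positivity)] at hα'
      nlinarith
    have hf : 0 < 1 - α * (D - 1) * q + α * D * q ^ 2 := by
      nlinarith [sq_nonneg (2 * D * q - (D - 1)), mul_pos hα hD0]
    exact mul_pos hp hf
end

section
/- Fix J ≠ 0 and q_i, q_j ∈ (0,1), with d_i, d_j > 2 integers. Then the function β ↦ c₁/(q_i q_j(1-q_i)(1-q_j)) + c₂/T_β(q_i,q_j) is strictly decreasing in β on (0,∞), where c₁, c₂, T_β are as in the edge-specific Bethe Hessian determinant. -/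
open Real Set

noncomputable def xiOptDisc (α x y : ℝ) : ℝ :=
  (1 + α * (x + y)) ^ 2 - 4 * α * (1 + α) * x * y

theorem pos_of_mul_add_mul_pos {R : Type*} [CommRing R] [LinearOrder R] [IsStrictOrderedRing R]
    {d s c : R} (hs : 0 < s) (hc : c ≤ 0) (h : 0 < d * (s + c * d)) : 0 < d := by
  by_contra! hd
  exact h.not_ge (mul_nonpos_of_nonpos_of_nonneg hd (by nlinarith))

section XiOpt

variable {α x y : ℝ}

theorem xiOptDisc_pos (hx : x ∈ Ioo 0 1) (hy : y ∈ Ioo 0 1) (hα : -1 < α) :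
    0 < xiOptDisc α x y := by
  obtain ⟨hx0, hx1⟩ := hx
  obtain ⟨hy0, hy1⟩ := hy
  unfold xiOptDisc
  rcases lt_trichotomy α 0 with h | rfl | h
  · nlinarith [sq_nonneg (1 + α * (x + y)),
      mul_pos (mul_pos (neg_pos.2 h) (by linarith : (0:ℝ) < 1 + α)) (mul_pos hx0 hy0)]
  · norm_num
  · nlinarith [sq_nonneg (α * (x - y)),
      mul_pos (mul_pos h hx0) (sub_pos.2 hy1), mul_pos (mul_pos h hy0) (sub_pos.2 hx1)]

theorem xiOpt_comm : xiOpt α x y = xiOpt α y x := by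
  unfold xiOpt
  ring_nf

theorem sqrt_xiOptDisc_eq (hα : α ≠ 0) :
    √(xiOptDisc α x y) = 1 + α * (x + y - 2 * xiOpt α x y) := by
  unfold xiOpt xiOptDisc
  field_simp
  ring

theorem xiOpt_sub_mul_eq (hα : α ≠ 0) (hD : 0 ≤ xiOptDisc α x y) :
    xiOpt α x y - x * y = α * (x - xiOpt α x y) * (y - xiOpt α x y) := by
  have hsq : (1 + α * (x + y - 2 * xiOpt α x y)) ^ 2 = xiOptDisc α x y := by
    rw [← sqrt_xiOptDisc_eq hα, sq_sqrt hD]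
  unfold xiOptDisc at hsq
  apply mul_left_cancel₀ (mul_ne_zero four_ne_zero hα)
  linear_combination -hsq

theorem one_add_mul_sub_two_mul_xiOpt_pos (hx : x ∈ Ioo 0 1) (hy : y ∈ Ioo 0 1) (hα : -1 < α)
    (hα0 : α ≠ 0) : 0 < 1 + α * (x + y - 2 * xiOpt α x y) :=
  sqrt_xiOptDisc_eq hα0 ▸ sqrt_pos.2 (xiOptDisc_pos hx hy hα)

theorem xiOpt_lt_left (hx : x ∈ Ioo 0 1) (hy : y ∈ Ioo 0 1) (hα : -1 < α) (hα0 : α ≠ 0) :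
    xiOpt α x y < x := by
  have hroot := xiOpt_sub_mul_eq (x := x) (y := y) hα0 (xiOptDisc_pos hx hy hα).le
  have hslope := one_add_mul_sub_two_mul_xiOpt_pos hx hy hα hα0
  obtain ⟨hx0, hx1⟩ := hx
  obtain ⟨hy0, hy1⟩ := hy
  set ξ := xiOpt α x y
  have hxξ : 0 < (x - ξ) * (1 + α * (y - ξ)) := by
    rw [show (x - ξ) * (1 + α * (y - ξ)) = x * (1 - y) by linear_combination -hroot]
    exact mul_pos hx0 (sub_pos.2 hy1)
  have hyξ : 0 < (y - ξ) * (1 + α * (x - ξ)) := by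
    rw [show (y - ξ) * (1 + α * (x - ξ)) = y * (1 - x) by linear_combination -hroot]
    exact mul_pos hy0 (sub_pos.2 hx1)
  -- The two cofactors add up to `1 + √D > 0`; if the first were `≤ 0` we would get
  -- `x < ξ < y`, so `0 < y - ξ < 1`, and then `1 + α (y - ξ) > 0` as `α > -1`.
  suffices ha : 0 < 1 + α * (y - ξ) from sub_pos.1 ((pos_iff_pos_of_mul_pos hxξ).2 ha)
  by_contra! ha
  have hξx : x < ξ := sub_neg.1 (neg_of_mul_pos_left hxξ ha)
  have hξy : ξ < y := sub_pos.1 ((pos_iff_pos_of_mul_pos hyξ).2 (by linarith))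
  nlinarith [mul_pos (sub_pos.2 hξy) (neg_lt_iff_pos_add'.1 hα)]

theorem xiOpt_lt_right (hx : x ∈ Ioo 0 1) (hy : y ∈ Ioo 0 1) (hα : -1 < α) (hα0 : α ≠ 0) :
    xiOpt α x y < y :=
  xiOpt_comm (α := α) ▸ xiOpt_lt_left hy hx hα hα0

theorem sub_xiOpt_mul_sub_xiOpt_pos (hx : x ∈ Ioo 0 1) (hy : y ∈ Ioo 0 1) (hα : -1 < α)
    (hα0 : α ≠ 0) : 0 < (x - xiOpt α x y) * (y - xiOpt α x y) :=
  mul_pos (sub_pos.2 (xiOpt_lt_left hx hy hα hα0)) (sub_pos.2 (xiOpt_lt_right hx hy hα hα0))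

theorem TOpt_eq_sqrt_mul (hα : α ≠ 0) (hD : 0 ≤ xiOptDisc α x y) :
    TOpt α x y = √(xiOptDisc α x y) * (x - xiOpt α x y) * (y - xiOpt α x y) := by
  rw [TOpt, sqrt_xiOptDisc_eq hα]
  linear_combination (x + y - 2 * xiOpt α x y) * xiOpt_sub_mul_eq hα hD

theorem TOpt_pos (hx : x ∈ Ioo 0 1) (hy : y ∈ Ioo 0 1) (hα : -1 < α) (hα0 : α ≠ 0) :
    0 < TOpt α x y := by
  have hD := xiOptDisc_pos hx hy hα
  rw [TOpt_eq_sqrt_mul hα0 hD.le, mul_assoc]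
  exact mul_pos (sqrt_pos.2 hD) (sub_xiOpt_mul_sub_xiOpt_pos hx hy hα hα0)

theorem mul_xiOpt_sub_mul_pos (hx : x ∈ Ioo 0 1) (hy : y ∈ Ioo 0 1) (hα : -1 < α)
    (hα0 : α ≠ 0) : 0 < α * (xiOpt α x y - x * y) := by
  set ξ := xiOpt α x y
  calc 0 < α * α * ((x - ξ) * (y - ξ)) :=
        mul_pos (mul_self_pos.2 hα0) (sub_xiOpt_mul_sub_xiOpt_pos hx hy hα hα0)
    _ = α * (ξ - x * y) := by rw [xiOpt_sub_mul_eq hα0 (xiOptDisc_pos hx hy hα).le]; ring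

theorem xiOpt_lt_xiOpt {α₁ α₂ : ℝ} (hx : x ∈ Ioo 0 1) (hy : y ∈ Ioo 0 1) (hα₁ : -1 < α₁)
    (hα₁0 : α₁ ≠ 0) (hα₂0 : α₂ ≠ 0) (hlt : α₁ < α₂) : xiOpt α₁ x y < xiOpt α₂ x y := by
  have hα₂ : -1 < α₂ := hα₁.trans hlt
  set ξ₁ := xiOpt α₁ x y
  set ξ₂ := xiOpt α₂ x y
  have hr₁ : ξ₁ - x * y = α₁ * (x - ξ₁) * (y - ξ₁) :=
    xiOpt_sub_mul_eq hα₁0 (xiOptDisc_pos hx hy hα₁).le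
  have hr₂ : ξ₂ - x * y = α₂ * (x - ξ₂) * (y - ξ₂) :=
    xiOpt_sub_mul_eq hα₂0 (xiOptDisc_pos hx hy hα₂).le
  -- Subtracting the two root equations gives both
  -- `(ξ₂ - ξ₁) (√D₂ + α₂ (ξ₂ - ξ₁)) = (α₂ - α₁) (x - ξ₁)(y - ξ₁)` and
  -- `(ξ₂ - ξ₁) (√D₁ - α₁ (ξ₂ - ξ₁)) = (α₂ - α₁) (x - ξ₂)(y - ξ₂)`.
  rcases hα₁0.lt_or_gt with hα₁neg | hα₁pos <;> rcases hα₂0.lt_or_gt with hα₂neg | hα₂pos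
  · have hP₁ : 0 < (α₂ - α₁) * ((x - ξ₁) * (y - ξ₁)) :=
      mul_pos (sub_pos.2 hlt) (sub_xiOpt_mul_sub_xiOpt_pos hx hy hα₁ hα₁0)
    refine sub_pos.1 (pos_of_mul_add_mul_pos (one_add_mul_sub_two_mul_xiOpt_pos hx hy hα₂ hα₂0)
      hα₂neg.le (hP₁.trans_eq ?_))
    linear_combination hr₁ - hr₂
  · have h₁ := (neg_iff_neg_of_mul_pos (mul_xiOpt_sub_mul_pos hx hy hα₁ hα₁0)).1 hα₁neg
    have h₂ := (pos_iff_pos_of_mul_pos (mul_xiOpt_sub_mul_pos hx hy hα₂ hα₂0)).1 hα₂pos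
    linarith
  · linarith
  · have hP₂ : 0 < (α₂ - α₁) * ((x - ξ₂) * (y - ξ₂)) :=
      mul_pos (sub_pos.2 hlt) (sub_xiOpt_mul_sub_xiOpt_pos hx hy hα₂ hα₂0)
    refine sub_pos.1 (pos_of_mul_add_mul_pos (one_add_mul_sub_two_mul_xiOpt_pos hx hy hα₁ hα₁0)
      (neg_nonpos.2 hα₁pos.le) (hP₂.trans_eq ?_))
    linear_combination hr₁ - hr₂

theorem TOpt_strictAntiOn_Ioi (hx : x ∈ Ioo 0 1) (hy : y ∈ Ioo 0 1) :
    StrictAntiOn (fun α => TOpt α x y) (Ioi 0) := by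
  intro α₁ (hα₁ : 0 < α₁) α₂ (hα₂ : 0 < α₂) h
  have h₁ := (pos_iff_pos_of_mul_pos
    (mul_xiOpt_sub_mul_pos hx hy (by linarith) hα₁.ne')).1 hα₁
  have hξ := xiOpt_lt_xiOpt hx hy (by linarith) hα₁.ne' hα₂.ne' h
  simp only [TOpt]
  nlinarith

theorem TOpt_strictMonoOn_Ioo (hx : x ∈ Ioo 0 1) (hy : y ∈ Ioo 0 1) :
    StrictMonoOn (fun α => TOpt α x y) (Ioo (-1) 0) := by
  intro α₁ ⟨hα₁, hα₁0⟩ α₂ ⟨_, hα₂0⟩ h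
  have h₂ := (neg_iff_neg_of_mul_pos (mul_xiOpt_sub_mul_pos hx hy (by linarith) hα₂0.ne)).1 hα₂0
  have hξ := xiOpt_lt_xiOpt hx hy hα₁ hα₁0.ne hα₂0.ne h
  simp only [TOpt]
  nlinarith

theorem TOpt_exp_strictAntiOn {J : ℝ} (hx : x ∈ Ioo 0 1) (hy : y ∈ Ioo 0 1) (hJ : J ≠ 0) :
    StrictAntiOn (fun β => TOpt (exp (4 * β * J) - 1) x y) (Ioi 0) := by
  rcases hJ.lt_or_gt with hJ | hJ
  · refine (TOpt_strictMonoOn_Ioo hx hy).comp_strictAntiOn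
      (f := fun β => exp (4 * β * J) - 1) ?_ ?_
    · intro a _ b _ hab
      simp only [sub_lt_sub_iff_right, exp_lt_exp]
      nlinarith
    · intro β (hβ : 0 < β)
      exact ⟨by linarith [exp_pos (4 * β * J)],
        sub_neg.2 (exp_lt_one_iff.2 (mul_neg_of_pos_of_neg (by positivity) hJ))⟩
  · refine (TOpt_strictAntiOn_Ioi hx hy).comp_strictMonoOn
      (f := fun β => exp (4 * β * J) - 1) ?_ ?_
    · intro a _ b _ hab
      simp only [sub_lt_sub_iff_right, exp_lt_exp]
      nlinarith
    · intro β (hβ : 0 < β)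
      exact sub_pos.2 (one_lt_exp_iff.2 (by positivity))

end XiOpt

theorem two_thirds_le_sub_one_div {K : Type*} [Field K] [LinearOrder K] [IsStrictOrderedRing K]
    {d : ℕ} (hd : 2 < d) : (2 : K) / 3 ≤ ((d : K) - 1) / d := by
  have : (3 : K) ≤ d := by exact_mod_cast hd
  rw [div_le_div_iff₀ (by norm_num) (by linarith)]
  linarith

theorem bethe_detH_strictly_decreasing (di dj : ℕ) (hdi : 2 < di) (hdj : 2 < dj)
    (J : ℝ) (hJ : J ≠ 0) (qi qj : ℝ)
    (hqi : qi ∈ Set.Ioo (0:ℝ) 1) (hqj : qj ∈ Set.Ioo (0:ℝ) 1) :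
    StrictAntiOn
      (fun β : ℝ =>
        (((di:ℝ) - 1) / di) * (((dj:ℝ) - 1) / dj) / (qi * qj * (1 - qi) * (1 - qj))
          + (1 - ((di:ℝ) - 1) / di - ((dj:ℝ) - 1) / dj)
              / TOpt (Real.exp (4 * β * J) - 1) qi qj)
      (Set.Ioi (0:ℝ)) := by
  have hc₂ : 1 - ((di:ℝ) - 1) / di - ((dj:ℝ) - 1) / dj < 0 := by
    linarith [two_thirds_le_sub_one_div (K := ℝ) hdi, two_thirds_le_sub_one_div (K := ℝ) hdj]
  have hTpos : ∀ β : ℝ, 0 < β → 0 < TOpt (exp (4 * β * J) - 1) qi qj := fun β hβ =>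
    TOpt_pos hqi hqj (by linarith [exp_pos (4 * β * J)])
      (sub_ne_zero.2 ((exp_eq_one_iff _).not.2 (mul_ne_zero (by positivity) hJ)))
  intro a ha b hb hab
  have hT := TOpt_exp_strictAntiOn hqi hqj hJ ha hb hab
  simp only [add_lt_add_iff_left]
  rw [div_lt_div_iff₀ (hTpos b hb) (hTpos a ha)]
  exact mul_lt_mul_of_neg_left hT hc₂
end

section
/- Let J ≠ 0 and β > 0. Then ξ_β(1/2, 1/2) = σ(2βJ)/2 where σ(x) = 1/(1 + e^{-x}), and T_β(1/2, 1/2) = 1/(16 cosh²(βJ)), where ξ_β is the positive root of (1+α(q_i+q_j))ξ = αξ² + (1+α)q_i q_j at q_i = q_j = 1/2 with α = e^{4βJ} - 1, and T_β = q_i q_j(1-q_i)(1-q_j) - (ξ_β - q_i q_j)². -/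
theorem bethe_center_point_values (J β : ℝ) (hJ : J ≠ 0) (hβ : 0 < β) :
    xiOpt (Real.exp (4 * β * J) - 1) (1/2) (1/2)
        = (1 / (1 + Real.exp (-(2 * β * J)))) / 2 ∧
    TOpt (Real.exp (4 * β * J) - 1) (1/2) (1/2)
        = 1 / (16 * Real.cosh (β * J) ^ 2) := by
  set s := Real.exp (β * J) with hsdef
  have hspos : 0 < s := Real.exp_pos _
  have hsne1 : s ≠ 1 := by
    rw [hsdef, Ne, Real.exp_eq_one_iff, mul_eq_zero]
    push_neg
    exact ⟨ne_of_gt hβ, hJ⟩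
  have h4 : Real.exp (4 * β * J) = s ^ 4 := by
    have h : 4 * β * J = β * J + β * J + β * J + β * J := by ring
    rw [h, Real.exp_add, Real.exp_add, Real.exp_add, ← hsdef]; ring
  have h2 : Real.exp (2 * β * J) = s ^ 2 := by
    have h : 2 * β * J = β * J + β * J := by ring
    rw [h, Real.exp_add, ← hsdef]; ring
  have h2n : Real.exp (-(2 * β * J)) = 1 / s ^ 2 := by
    rw [Real.exp_neg, h2, one_div]
  have hcosh : Real.cosh (β * J) = (s + 1 / s) / 2 := by
    rw [Real.cosh_eq, Real.exp_neg, ← hsdef, one_div]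
  have hs1 : s - 1 ≠ 0 := sub_ne_zero.mpr hsne1
  have hs2 : s + 1 ≠ 0 := by positivity
  have hs3 : s ^ 2 + 1 ≠ 0 := by positivity
  have hsne : s ≠ 0 := ne_of_gt hspos
  have hα : s ^ 4 - 1 ≠ 0 := by
    have h : s ^ 4 - 1 = (s - 1) * (s + 1) * (s ^ 2 + 1) := by ring
    rw [h]
    exact mul_ne_zero (mul_ne_zero hs1 hs2) hs3
  have harg : (1 + (s ^ 4 - 1) * ((1:ℝ)/2 + 1/2)) ^ 2
      - 4 * (s ^ 4 - 1) * (1 + (s ^ 4 - 1)) * (1/2) * (1/2) = (s ^ 2) ^ 2 := by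
    ring
  have hsqrt : Real.sqrt ((1 + (s ^ 4 - 1) * ((1:ℝ)/2 + 1/2)) ^ 2
      - 4 * (s ^ 4 - 1) * (1 + (s ^ 4 - 1)) * (1/2) * (1/2)) = s ^ 2 := by
    rw [harg, Real.sqrt_sq (by positivity)]
  have hxi : xiOpt (Real.exp (4 * β * J) - 1) (1/2) (1/2)
      = (1 / (1 + Real.exp (-(2 * β * J)))) / 2 := by
    rw [xiOpt, h4, h2n, hsqrt]
    field_simp
    ring
  refine ⟨hxi, ?_⟩
  rw [TOpt, hxi, h2n, hcosh]
  field_simp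
  ring
end

section
/- Let d_i, d_j > 2 be integers, J ≠ 0, and β* = (1/(2|J|)) · arccosh(1 + 2/(d_i d_j - d_i - d_j)). For β > 0, define D(β) = 16·((d_i-1)/d_i)·((d_j-1)/d_j) - 16·((d_i d_j - d_i - d_j)/(d_i d_j))·cosh²(βJ). Then D(β) > 0 for β < β*, D(β*) = 0, and D(β) < 0 for β > β*. -/
noncomputable def arcosh (x : ℝ) : ℝ := Real.log (x + Real.sqrt (x ^ 2 - 1))

/-! With `c = dᵢdⱼ - dᵢ - dⱼ > 0` one has `(dᵢ - 1)(dⱼ - 1) = c + 1`, so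
`D(β) = 16c/(dᵢdⱼ) · (1 + 1/c - cosh²(βJ))`. The half-angle identity
`cosh²(x/2) = (1 + cosh x)/2` gives `cosh²(β*J) = (2 + 2/c)/2 = 1 + 1/c`, and `cosh²(βJ)` is
strictly increasing in `β ≥ 0`, so `D` changes sign exactly at `β*`. -/

theorem arcosh_eq_real_arcosh : arcosh = Real.arcosh := rfl

theorem Real.cosh_half_sq (x : ℝ) : cosh (x / 2) ^ 2 = (1 + cosh x) / 2 := by
  have h := cosh_two_mul (x / 2)
  rw [mul_div_cancel₀ x two_ne_zero] at h
  linarith [cosh_sq (x / 2)]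

theorem Real.cosh_sq_mul_lt_cosh_sq_mul {a b J : ℝ} (ha : 0 ≤ a) (hab : a < b) (hJ : J ≠ 0) :
    cosh (a * J) ^ 2 < cosh (b * J) ^ 2 := by
  refine pow_lt_pow_left₀ (cosh_lt_cosh.2 ?_) (cosh_pos _).le two_ne_zero
  rw [abs_mul, abs_mul, abs_of_nonneg ha, abs_of_pos (ha.trans_lt hab)]
  exact mul_lt_mul_of_pos_right hab (abs_pos.2 hJ)

theorem cosh_sq_arcosh_threshold {y J : ℝ} (hy : 1 ≤ y) (hJ : J ≠ 0) :
    Real.cosh (1 / (2 * |J|) * arcosh y * J) ^ 2 = (1 + y) / 2 := by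
  rw [arcosh_eq_real_arcosh]
  have hθ : |1 / (2 * |J|) * Real.arcosh y * J| = Real.arcosh y / 2 := by
    rw [abs_mul, abs_of_nonneg (mul_nonneg (by positivity) (Real.arcosh_nonneg hy))]
    field_simp [abs_ne_zero.2 hJ]
  rw [← Real.cosh_abs, hθ, Real.cosh_half_sq, Real.cosh_arcosh hy]

theorem bethe_center_det_eq_mul_sub {a b x : ℝ} (ha : a ≠ 0) (hb : b ≠ 0)
    (hc : a * b - a - b ≠ 0) :
    16 * ((a - 1) / a) * ((b - 1) / b) - 16 * ((a * b - a - b) / (a * b)) * x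
      = 16 * (a * b - a - b) / (a * b) * (1 + 1 / (a * b - a - b) - x) := by
  have hc1 : (a * b - a - b) * (1 + 1 / (a * b - a - b)) = (a - 1) * (b - 1) := by
    rw [mul_add, mul_one_div_cancel hc]; ring
  rw [mul_sub, div_mul_eq_mul_div, mul_assoc (16 : ℝ) _ (1 + _), hc1]
  field_simp

theorem bethe_center_determinant_sign (di dj : ℕ) (hdi : 2 < di) (hdj : 2 < dj)
    (J : ℝ) (hJ : J ≠ 0) :
    let βstar := (1 / (2 * |J|)) * arcosh (1 + 2 / ((di:ℝ) * dj - di - dj))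
    let D : ℝ → ℝ := fun β =>
      16 * (((di:ℝ) - 1) / di) * (((dj:ℝ) - 1) / dj)
        - 16 * (((di:ℝ) * dj - di - dj) / ((di:ℝ) * dj)) * Real.cosh (β * J) ^ 2
    (∀ β : ℝ, 0 < β → β < βstar → D β > 0) ∧
    D βstar = 0 ∧
    (∀ β : ℝ, βstar < β → D β < 0) := by
  intro βstar D
  have hdi' : (3 : ℝ) ≤ di := by exact_mod_cast hdi
  have hdj' : (3 : ℝ) ≤ dj := by exact_mod_cast hdj
  set c : ℝ := (di : ℝ) * dj - di - dj
  have hc : 0 < c := by nlinarith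
  have hK : 0 < 16 * c / ((di : ℝ) * dj) := by positivity
  have hy : 1 ≤ 1 + 2 / c := le_add_of_nonneg_right (by positivity)
  have hβstar : 0 ≤ βstar := mul_nonneg (by positivity) (Real.arcosh_nonneg hy)
  have hthreshold : Real.cosh (βstar * J) ^ 2 = 1 + 1 / c := by
    rw [cosh_sq_arcosh_threshold hy hJ]; ring
  have hD : ∀ β, D β =
      16 * c / ((di : ℝ) * dj) * (Real.cosh (βstar * J) ^ 2 - Real.cosh (β * J) ^ 2) :=
    fun β => by
      rw [hthreshold]; exact bethe_center_det_eq_mul_sub (by positivity) (by positivity) hc.ne'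
  refine ⟨fun β hβ hlt => ?_, by rw [hD, sub_self, mul_zero], fun β hlt => ?_⟩
  · rw [hD]
    exact mul_pos hK (sub_pos.2 (Real.cosh_sq_mul_lt_cosh_sq_mul hβ.le hlt hJ))
  · rw [hD]
    exact mul_neg_of_pos_of_neg hK (sub_neg.2 (Real.cosh_sq_mul_lt_cosh_sq_mul hβstar hlt hJ))
end
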